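/- Let H be a pre-Hilbert left 𝕆-module and S = {x_α} a weak associative orthonormal family (⟨x_α,x_β⟩ = δ_{αβ} and ⟨p·x_α, x_β⟩ = p·⟨x_α,x_β⟩ for all p ∈ 𝕆). Then the family {e_i·x_α : 0 ≤ i ≤ 7} is orthonormal with respect to the real inner product ⟨u,v⟩_ℝ := Re⟨u,v⟩, i.e. ⟨e_i·x_α, e_j·x_β⟩_ℝ = δ_{ij}·δ_{αβ}. -/

import Mathlib

noncomputable section

/-- The octonions, realized as the Cayley–Dickson double of the quaternions. -/
abbrev 𝕆 : Type := Quaternion ℝ × Quaternion ℝ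

/-- Octonion multiplication via the Cayley–Dickson formula
`(a,b)(c,d) = (ac - d̄b, da + bc̄)`. -/
def omul (x y : 𝕆) : 𝕆 :=
  (x.1 * y.1 - star y.2 * x.2, y.2 * x.1 + x.2 * star y.1)

/-- Octonionic conjugation. -/
def oconj (x : 𝕆) : 𝕆 := (star x.1, -x.2)

/-- The octonion `1`. -/
def oone : 𝕆 := (1, 0)

/-- Real part of an octonion. -/
def ore (x : 𝕆) : ℝ := x.1.re

/-- Embedding of the reals into the octonions. -/
def oreal (r : ℝ) : 𝕆 := ((r : Quaternion ℝ), 0)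

/-- Squared norm of an octonion. -/
def onormSq (x : 𝕆) : ℝ := ore (omul x (oconj x))

def qi : Quaternion ℝ := ⟨0, 1, 0, 0⟩
def qj : Quaternion ℝ := ⟨0, 0, 1, 0⟩
def qk : Quaternion ℝ := ⟨0, 0, 0, 1⟩

/-- The standard basis `e₀ = 1, e₁, …, e₇` of the octonions. -/
def oe : Fin 8 → 𝕆
  | 0 => (1, 0)
  | 1 => (qi, 0)
  | 2 => (qj, 0)
  | 3 => (qk, 0)
  | 4 => (0, 1)
  | 5 => (0, qi)
  | 6 => (0, qj)
  | 7 => (0, qk)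

/-- A pre-Hilbert left `𝕆`-module: a real vector space `H` with an `ℝ`-linear
left `𝕆`-scalar multiplication `sm` satisfying `1·x = x` and the alternating
left-associator law, together with an `ℝ`-bilinear `𝕆`-valued inner product `inn`
which is `𝕆`-para-linear, hermitian and positive definite. -/
structure PreHilbO (H : Type*) [AddCommGroup H] [Module ℝ H] where
  sm : 𝕆 →ₗ[ℝ] H →ₗ[ℝ] H
  inn : H →ₗ[ℝ] H →ₗ[ℝ] 𝕆
  one_sm : ∀ x : H, sm oone x = x
  alt : ∀ (p q : 𝕆) (x : H),
    sm (omul p q) x - sm p (sm q x) = -(sm (omul q p) x - sm q (sm p x))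
  para : ∀ (p : 𝕆) (u v : H), ore (inn (sm p u) v - omul p (inn u v)) = 0
  herm : ∀ u v : H, inn u v = oconj (inn v u)
  pos : ∀ u : H, ∃ r : ℝ, 0 ≤ r ∧ inn u u = oreal r
  posdef : ∀ u : H, inn u u = 0 → u = 0

/-!
Hermiticity makes `Re⟨u, v⟩` symmetric, and para-linearity lets an octonion
scalar leave the first slot under `Re`. Hence `Re⟨e_i x_α, e_j x_β⟩ = Re(e_j · conj(e_i ⟨x_α, x_β⟩))`
by weak associativity, which orthonormality reduces to `δ_{αβ} Re(e_j ē_i) = δ_{αβ} δ_{ij}`.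
-/

lemma ore_zero : ore 0 = 0 := rfl

lemma ore_sub (a b : 𝕆) : ore (a - b) = ore a - ore b := by
  simp [ore]

lemma ore_oconj (a : 𝕆) : ore (oconj a) = ore a := by
  simp [ore, oconj]

lemma oconj_zero : oconj 0 = 0 := by
  simp [oconj]

lemma omul_zero (p : 𝕆) : omul p 0 = 0 := by
  simp [omul]

lemma omul_oone (p : 𝕆) : omul p oone = p := by
  simp [omul, oone]

lemma ore_omul_oconj (a b : 𝕆) :
    ore (omul a (oconj b)) = (a.1 * star b.1).re + (star b.2 * a.2).re := by
  simp [ore, omul, oconj, sub_eq_add_neg]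

lemma ore_omul_oe_oconj_oe (i j : Fin 8) :
    ore (omul (oe j) (oconj (oe i))) = if i = j then 1 else 0 := by
  fin_cases i <;> fin_cases j <;>
    simp only [ore_omul_oconj, oe, Quaternion.re_mul, Quaternion.re_star, Quaternion.imI_star,
      Quaternion.imJ_star, Quaternion.imK_star, Quaternion.re_zero, Quaternion.re_one,
      Quaternion.imI_zero, Quaternion.imJ_zero, Quaternion.imK_zero, Quaternion.imI_one,
      Quaternion.imJ_one, Quaternion.imK_one] <;>
    simp [qi, qj, qk]

namespace PreHilbO

variable {H : Type*} [AddCommGroup H] [Module ℝ H] (h : PreHilbO H)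

lemma ore_inn_comm (u v : H) : ore (h.inn u v) = ore (h.inn v u) := by
  rw [h.herm, ore_oconj]

lemma ore_inn_sm_left (p : 𝕆) (u v : H) :
    ore (h.inn (h.sm p u) v) = ore (omul p (h.inn u v)) :=
  sub_eq_zero.mp (ore_sub _ _ ▸ h.para p u v)

lemma ore_inn_sm_sm (p q : 𝕆) (u v : H) :
    ore (h.inn (h.sm p u) (h.sm q v)) = ore (omul q (oconj (h.inn (h.sm p u) v))) := by
  rw [ore_inn_comm, ore_inn_sm_left, ← h.herm]

end PreHilbO

/-- If the x_alpha form a weak associative orthonormal family, then the family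
of all e_i * x_alpha is orthonormal for the real inner product Re (inn u v). -/
theorem stmt_19 {H : Type*} [AddCommGroup H] [Module ℝ H] (h : PreHilbO H)
    {ι : Type*} [DecidableEq ι] (x : ι → H)
    (horth : ∀ α β : ι, h.inn (x α) (x β) = if α = β then oone else 0)
    (hwa : ∀ (p : 𝕆) (α β : ι),
      h.inn (h.sm p (x α)) (x β) = omul p (h.inn (x α) (x β))) :
    ∀ (i j : Fin 8) (α β : ι),
      ore (h.inn (h.sm (oe i) (x α)) (h.sm (oe j) (x β)))
        = if i = j ∧ α = β then 1 else 0 := by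
  intro i j α β
  rw [h.ore_inn_sm_sm, hwa, horth]
  by_cases hαβ : α = β
  · simp only [hαβ, if_true, and_true, omul_oone, ore_omul_oe_oconj_oe]
  · simp only [hαβ, if_false, and_false, omul_zero, oconj_zero, ore_zero]
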